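/- arXiv:2204.02299 — 6 statements merged into one kernel-verified Lean document; each statement's English description precedes it below -/
import Mathlib

section
/- Fix σ > 0, γ > 0, a constant c ∈ ℝ, and b ≠ 0, a ∈ ℝ. With y(ω) = a + bω, the ratio (1/σ) f((y(ω) − c)/σ) / f(y(ω)) converges to σ^γ as ω → ∞, where f is the Student-t density with γ degrees of freedom. -/
open Real Filter

/-- With `y(ω) = a + b ω` (`b ≠ 0`), the ratio `(1/σ) f((y(ω) − c)/σ) / f(y(ω))`
converges to `σ^γ` as `ω → ∞`, where `f` is the Student-t density with `γ > 0`
degrees of freedom. -/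
theorem student_outlier_ratio_limit (γ : ℝ) (hγ : 0 < γ) (cγ : ℝ) (hcγ : 0 < cγ)
    (f : ℝ → ℝ) (hf : ∀ z : ℝ, f z = cγ * (1 + z ^ 2 / γ) ^ (-(γ + 1) / 2))
    (σ : ℝ) (hσ : 0 < σ) (c a b : ℝ) (hb : b ≠ 0) :
    Tendsto (fun ω : ℝ => (1 / σ) * f ((a + b * ω - c) / σ) / f (a + b * ω))
      atTop (nhds (σ ^ γ)) := by
  set e : ℝ := -(γ + 1) / 2 with he
  have hσ2 : (0:ℝ) < σ ^ 2 := by positivity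
  -- the inner ratio
  set q : ℝ → ℝ := fun ω => (1 + ((a + b * ω - c) / σ) ^ 2 / γ) / (1 + (a + b * ω) ^ 2 / γ)
    with hqdef
  -- the substituted function
  set H : ℝ → ℝ := fun t =>
    (γ * σ ^ 2 * t ^ 2 + ((a - c) * t + b) ^ 2) / (σ ^ 2 * (γ * t ^ 2 + (a * t + b) ^ 2))
    with hHdef
  have hH0 : H 0 = (σ ^ 2)⁻¹ := by
    simp only [hHdef]
    field_simp
    ring
  have hHcont : ContinuousAt H 0 := by
    apply ContinuousAt.div
    · fun_prop
    · fun_prop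
    · simp only [mul_zero, zero_mul, zero_add, add_zero]
      positivity
  have hinv : Tendsto (fun ω : ℝ => ω⁻¹) atTop (nhds 0) := tendsto_inv_atTop_zero
  have hq : Tendsto q atTop (nhds ((σ ^ 2)⁻¹)) := by
    rw [← hH0]
    refine (hHcont.tendsto.comp hinv).congr' ?_
    filter_upwards [eventually_gt_atTop 0] with ω hω
    have hω0 : ω ≠ 0 := ne_of_gt hω
    simp only [Function.comp, hHdef, hqdef]
    field_simp
    ring
  -- main limit before computing the constant
  have hmain : Tendsto (fun ω : ℝ => (1 / σ) * (q ω) ^ e) atTop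
      (nhds ((1 / σ) * ((σ ^ 2)⁻¹) ^ e)) := by
    exact (((Real.continuousAt_rpow_const _ e (Or.inl (by positivity))).tendsto).comp hq).const_mul _
  -- value computation
  have hval : (1 / σ) * ((σ ^ 2)⁻¹) ^ e = σ ^ γ := by
    rw [← Real.rpow_natCast σ 2, Real.inv_rpow (by positivity), ← Real.rpow_mul hσ.le,
      ← Real.rpow_neg hσ.le]
    push_cast
    rw [he, show -((2:ℝ) * (-(γ + 1) / 2)) = γ + 1 by ring, Real.rpow_add hσ, Real.rpow_one]
    field_simp
  rw [← hval]
  refine hmain.congr ?_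
  intro ω
  have hA : (0:ℝ) < 1 + ((a + b * ω - c) / σ) ^ 2 / γ := by positivity
  have hB : (0:ℝ) < 1 + (a + b * ω) ^ 2 / γ := by positivity
  rw [hf, hf, hqdef]
  simp only
  rw [Real.div_rpow hA.le hB.le]
  rw [mul_div_assoc, mul_div_mul_left _ _ (ne_of_gt hcγ)]
end

section
/- For Z a standard normal random variable and any s > 0, E[Z²/(s + Z²)] = 1 − √(2πs) e^{s/2} Φ(−√s), where Φ is the standard normal CDF. -/
/-!
Since `w ↦ w e^{-b w²}` has the antiderivative `-e^{-b w²}/(2b)`, the weight `s/(s+u²)` has the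
representation `s/(s+u²) e^{-u²/2} = e^{s/2} ∫_{√s}^∞ w e^{-(s+u²)w²/(2s)} dw`. Exchanging the
integrals, the `u`-integral of the exponential is Gaussian, `√(2πs) e^{-w²/2}/w`, which cancels
the factor `w`, so
`∫ s/(s+u²) e^{-u²/2} du = √(2πs) e^{s/2} ∫_{√s}^∞ e^{-w²/2} dw = √(2πs) e^{s/2} √(2π) Φ(-√s)`.
Subtracting from `∫ φ = 1` gives the identity.
-/

open Real MeasureTheory Set Filter Topology

theorem integral_Ioi_mul_exp_neg_mul_sq {b : ℝ} (hb : 0 < b) (c : ℝ) :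
    ∫ x in Ioi c, x * exp (-b * x ^ 2) = exp (-b * c ^ 2) / (2 * b) := by
  have hderiv : ∀ x ∈ Ici c, HasDerivAt (fun x => -(2 * b)⁻¹ * exp (-b * x ^ 2))
      (x * exp (-b * x ^ 2)) x := by
    intro x _
    refine (((hasDerivAt_pow 2 x).const_mul (-b)).exp.const_mul (-(2 * b)⁻¹)).congr_deriv ?_
    field_simp
    norm_num
  have hlim : Tendsto (fun x => -(2 * b)⁻¹ * exp (-b * x ^ 2)) atTop (𝓝 0) := by
    simpa using (tendsto_exp_atBot.comp
      ((tendsto_pow_atTop two_ne_zero).const_mul_atTop_of_neg (neg_lt_zero.2 hb))).const_mul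
      (-(2 * b)⁻¹)
  rw [integral_Ioi_of_hasDerivAt_of_tendsto' hderiv
    (integrable_mul_exp_neg_mul_sq hb).integrableOn hlim]
  ring

theorem integrable_exp_neg_sq_div_two : Integrable fun u : ℝ => exp (-u ^ 2 / 2) := by
  simpa [neg_div, div_eq_inv_mul] using integrable_exp_neg_mul_sq (b := 1 / 2) one_half_pos

theorem integral_exp_neg_sq_div_two : ∫ u : ℝ, exp (-u ^ 2 / 2) = √(2 * π) := by
  have h := integral_gaussian (1 / 2)
  simp only [one_div, div_inv_eq_mul, neg_mul] at h
  simpa [neg_div, div_eq_inv_mul, mul_comm] using h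

section

variable {s : ℝ}

theorem div_add_sq_mul_exp_eq_exp_mul_integral (hs : 0 < s) (u : ℝ) :
    s / (s + u ^ 2) * exp (-u ^ 2 / 2) =
      exp (s / 2) * ∫ w in Ioi √s, w * exp (-((s + u ^ 2) / (2 * s)) * w ^ 2) := by
  rw [integral_Ioi_mul_exp_neg_mul_sq (by positivity), sq_sqrt hs.le,
    show -((s + u ^ 2) / (2 * s)) * s = -(s / 2) + -u ^ 2 / 2 by field_simp; ring,
    exp_add, exp_neg]
  field_simp

theorem mul_exp_neg_add_sq_eq (hs : 0 < s) (w u : ℝ) :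
    w * exp (-((s + u ^ 2) / (2 * s)) * w ^ 2) =
      w * exp (-w ^ 2 / 2) * exp (-(w ^ 2 / (2 * s)) * u ^ 2) := by
  rw [mul_assoc, ← exp_add]
  congr 2
  field_simp
  ring

theorem integral_mul_exp_neg_add_sq (hs : 0 < s) {w : ℝ} (hw : 0 < w) :
    ∫ u, w * exp (-((s + u ^ 2) / (2 * s)) * w ^ 2) = √(2 * π * s) * exp (-w ^ 2 / 2) := by
  simp_rw [mul_exp_neg_add_sq_eq hs w]
  rw [integral_const_mul, integral_gaussian, div_div_eq_mul_div, sqrt_div' _ (sq_nonneg w),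
    sqrt_sq hw.le, show π * (2 * s) = 2 * π * s by ring]
  field_simp

theorem integrable_mul_exp_neg_add_sq (hs : 0 < s) :
    Integrable (fun p : ℝ × ℝ => p.1 * exp (-((s + p.2 ^ 2) / (2 * s)) * p.1 ^ 2))
      ((volume.restrict (Ioi √s)).prod volume) := by
  have hpos : ∀ w ∈ Ioi √s, 0 < w := fun w hw => (sqrt_nonneg s).trans_lt hw
  rw [integrable_prod_iff (by fun_prop)]
  constructor
  · refine (ae_restrict_iff' measurableSet_Ioi).mpr (ae_of_all _ fun w hw => ?_)
    simp_rw [mul_exp_neg_add_sq_eq hs w]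
    exact (integrable_exp_neg_mul_sq (by have := hpos w hw; positivity)).const_mul _
  · refine (integrable_exp_neg_sq_div_two.const_mul √(2 * π * s)).integrableOn.congr_fun
      (fun w hw => ?_) measurableSet_Ioi
    have hw0 := (hpos w hw).le
    dsimp only
    rw [← integral_mul_exp_neg_add_sq hs (hpos w hw)]
    congr with y
    exact (norm_of_nonneg (by positivity)).symm

theorem integral_div_add_sq_mul_exp (hs : 0 < s) :
    ∫ u, s / (s + u ^ 2) * exp (-u ^ 2 / 2) =
      √(2 * π * s) * exp (s / 2) * ∫ w in Ioi √s, exp (-w ^ 2 / 2) := by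
  calc ∫ u, s / (s + u ^ 2) * exp (-u ^ 2 / 2)
      = exp (s / 2) * ∫ u, ∫ w in Ioi √s, w * exp (-((s + u ^ 2) / (2 * s)) * w ^ 2) := by
        simp_rw [div_add_sq_mul_exp_eq_exp_mul_integral hs, integral_const_mul]
    _ = exp (s / 2) * ∫ w in Ioi √s, ∫ u, w * exp (-((s + u ^ 2) / (2 * s)) * w ^ 2) := by
        rw [← integral_integral_swap (integrable_mul_exp_neg_add_sq hs)]
    _ = exp (s / 2) * ∫ w in Ioi √s, √(2 * π * s) * exp (-w ^ 2 / 2) := by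
        congr 1
        exact setIntegral_congr_fun measurableSet_Ioi fun w hw =>
          integral_mul_exp_neg_add_sq hs ((sqrt_nonneg s).trans_lt hw)
    _ = √(2 * π * s) * exp (s / 2) * ∫ w in Ioi √s, exp (-w ^ 2 / 2) := by
        rw [integral_const_mul]
        ring

theorem integrable_div_add_sq_mul_exp (hs : 0 ≤ s) :
    Integrable fun u : ℝ => s / (s + u ^ 2) * exp (-u ^ 2 / 2) := by
  refine integrable_exp_neg_sq_div_two.bdd_mul (c := 1)
    (by fun_prop : Measurable _).aestronglyMeasurable (ae_of_all _ fun u => ?_)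
  rw [norm_of_nonneg (by positivity)]
  exact div_le_one_of_le₀ (by nlinarith [sq_nonneg u]) (by positivity)

end

/-- For `Z` standard normal and `s > 0`,
`E[Z²/(s + Z²)] = 1 − √(2πs) e^{s/2} Φ(−√s)`, where `Φ` is the standard normal CDF. -/
theorem gaussian_moment_identity (s : ℝ) (hs : 0 < s)
    (φ : ℝ → ℝ) (hφ : ∀ u : ℝ, φ u = (Real.sqrt (2 * Real.pi))⁻¹ * Real.exp (-(u ^ 2) / 2))
    (Φ : ℝ → ℝ) (hΦ : ∀ t : ℝ, Φ t = ∫ u in Set.Iic t, φ u) :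
    ∫ u : ℝ, u ^ 2 / (s + u ^ 2) * φ u =
      1 - Real.sqrt (2 * Real.pi * s) * Real.exp (s / 2) * Φ (-Real.sqrt s) := by
  have htail : Φ (-√s) = (√(2 * π))⁻¹ * ∫ w in Ioi √s, exp (-w ^ 2 / 2) := by
    rw [hΦ, ← integral_comp_neg_Ioi]
    simp only [hφ, neg_sq, integral_const_mul]
  have hsplit : ∀ u, u ^ 2 / (s + u ^ 2) * φ u =
      (√(2 * π))⁻¹ * exp (-u ^ 2 / 2) - (√(2 * π))⁻¹ * (s / (s + u ^ 2) * exp (-u ^ 2 / 2)) := by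
    intro u
    have : s + u ^ 2 ≠ 0 := by positivity
    rw [hφ]
    field_simp
    ring
  simp_rw [hsplit]
  rw [integral_sub (integrable_exp_neg_sq_div_two.const_mul _)
      ((integrable_div_add_sq_mul_exp hs.le).const_mul _),
    integral_const_mul, integral_const_mul, integral_exp_neg_sq_div_two,
    integral_div_add_sq_mul_exp hs, htail,
    inv_mul_cancel₀ (sqrt_pos.mpr (by positivity)).ne']
  ring
end

section
/- Let g be the standard normal density, γ > 0, η ∈ ℝ, and x·ξ < 0 a fixed real number (writing m = x·ξ). Then ∫_{−∞}^{m} [log(1 + u²/(e^{2η}γ)) − log(1 + (u−m)²/(e^{2η}γ))] g(u) du < ∫_0^∞ [log(1 + (w−m)²/(e^{2η}γ)) − log(1 + w²/(e^{2η}γ))] g(w) dw. -/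
/-!
Substituting `u = m - w` turns the left integral into `∫_0^∞ h(w) g(w - m) dw`, where `h(w)` is
the integrand bracket on the right. For `w > 0` and `m < 0` we have `|w - m| > |w|`, so `h(w) > 0`
and `g(w - m) < g(w)`: the integrands compare strictly on the whole half-line.
-/

open Real MeasureTheory Set

theorem setIntegral_lt_setIntegral_of_forall_lt {X : Type*} [MeasurableSpace X] {μ : Measure X}
    {s : Set X} {f g : X → ℝ} (hs : MeasurableSet s) (hμs : μ s ≠ 0)
    (hf : IntegrableOn f s μ) (hg : IntegrableOn g s μ) (hlt : ∀ x ∈ s, f x < g x) :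
    ∫ x in s, f x ∂μ < ∫ x in s, g x ∂μ := by
  have hpos : ∀ x ∈ s, 0 < g x - f x := fun x hx => sub_pos.2 (hlt x hx)
  rw [← sub_pos, ← integral_sub hg hf]
  refine (setIntegral_pos_iff_support_of_nonneg_ae ?_ (hg.sub hf)).2 ?_
  · filter_upwards [ae_restrict_mem hs] with x hx using (hpos x hx).le
  · have hsupp : s ⊆ Function.support (g - f) := fun x hx => (hpos x hx).ne'
    rwa [inter_eq_right.2 hsupp, pos_iff_ne_zero]

theorem setIntegral_Iic_eq_setIntegral_Ioi_sub_left {E : Type*} [NormedAddCommGroup E]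
    [NormedSpace ℝ E] (f : ℝ → E) (a : ℝ) :
    ∫ u in Iic a, f u = ∫ w in Ioi 0, f (a - w) := by
  have hpre : (fun w : ℝ => a - w) ⁻¹' Iio a = Ioi 0 := by ext w; simp
  rw [integral_Iic_eq_integral_Iio, ← hpre,
    (Measure.measurePreserving_sub_left volume a).setIntegral_preimage_emb
      (measurableEmbedding_subLeft a)]

theorem abs_log_one_add_sub_log_one_add_le {x y : ℝ} (hx : 0 ≤ x) (hy : 0 ≤ y) :
    |log (1 + x) - log (1 + y)| ≤ x + y := by
  have hlog_mem : ∀ {t : ℝ}, 0 ≤ t → 0 ≤ log (1 + t) ∧ log (1 + t) ≤ t := fun {t} ht =>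
    ⟨log_nonneg (by linarith), by linarith [log_le_sub_one_of_pos (by linarith : 0 < 1 + t)]⟩
  obtain ⟨hx₀, hx₁⟩ := hlog_mem hx
  obtain ⟨hy₀, hy₁⟩ := hlog_mem hy
  rw [abs_sub_le_iff]
  constructor <;> linarith

theorem integrable_mul_exp_neg_mul_sq_of_abs_le {f : ℝ → ℝ} (hf : AEStronglyMeasurable f)
    {b C D : ℝ} (hb : 0 < b) (hbound : ∀ x, |f x| ≤ C * x ^ 2 + D) :
    Integrable fun x => f x * exp (-b * x ^ 2) := by
  have hsq : Integrable fun x : ℝ => x ^ 2 * exp (-b * x ^ 2) := by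
    simpa using integrable_rpow_mul_exp_neg_mul_sq hb (s := 2) (by norm_num)
  refine ((hsq.const_mul C).add ((integrable_exp_neg_mul_sq hb).const_mul D)).mono'
    (hf.mul (by fun_prop)) (ae_of_all _ fun x => ?_)
  rw [norm_mul, norm_of_nonneg (exp_pos _).le, Real.norm_eq_abs]
  calc |f x| * exp (-b * x ^ 2) ≤ (C * x ^ 2 + D) * exp (-b * x ^ 2) :=
        mul_le_mul_of_nonneg_right (hbound x) (exp_pos _).le
    _ = C * (x ^ 2 * exp (-b * x ^ 2)) + D * exp (-b * x ^ 2) := by ring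

theorem integrable_mul_exp_neg_mul_sub_sq_of_abs_le {f : ℝ → ℝ} (hf : Continuous f)
    {b C D : ℝ} (hb : 0 < b) (hC : 0 ≤ C) (hbound : ∀ x, |f x| ≤ C * x ^ 2 + D) (a : ℝ) :
    Integrable fun x => f x * exp (-b * (x - a) ^ 2) := by
  have hshift : ∀ x, |f (x + a)| ≤ 2 * C * x ^ 2 + (2 * C * a ^ 2 + D) := fun x =>
    (hbound (x + a)).trans <| by nlinarith [sq_nonneg (x - a)]
  simpa using (integrable_mul_exp_neg_mul_sq_of_abs_le (by fun_prop) hb hshift).comp_sub_right a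

/-- For the standard normal density `g`, `γ > 0`, `η ∈ ℝ` and `m = x·ξ < 0`,
`∫_{−∞}^{m} [log(1 + u²/(e^{2η}γ)) − log(1 + (u−m)²/(e^{2η}γ))] g(u) du
  < ∫_0^∞ [log(1 + (w−m)²/(e^{2η}γ)) − log(1 + w²/(e^{2η}γ))] g(w) dw`. -/
theorem gaussian_log_kernel_tail_comparison (γ η m : ℝ) (hγ : 0 < γ) (hm : m < 0)
    (g : ℝ → ℝ) (hg : ∀ u : ℝ, g u = (Real.sqrt (2 * Real.pi))⁻¹ * Real.exp (-(u ^ 2) / 2)) :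
    (∫ u in Set.Iic m,
        (Real.log (1 + u ^ 2 / (Real.exp (2 * η) * γ)) -
          Real.log (1 + (u - m) ^ 2 / (Real.exp (2 * η) * γ))) * g u) <
      ∫ w in Set.Ioi (0 : ℝ),
        (Real.log (1 + (w - m) ^ 2 / (Real.exp (2 * η) * γ)) -
          Real.log (1 + w ^ 2 / (Real.exp (2 * η) * γ))) * g w := by
  simp only [hg]
  set c := exp (2 * η) * γ
  have hc : 0 < c := by positivity
  set h : ℝ → ℝ := fun w => log (1 + (w - m) ^ 2 / c) - log (1 + w ^ 2 / c)
  have hh_cont : Continuous h := by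
    refine .sub (.log (by fun_prop) fun w => ?_) (.log (by fun_prop) fun w => ?_) <;> positivity
  have hh_bound : ∀ w, |h w| ≤ 3 / c * w ^ 2 + 2 * m ^ 2 / c := fun w =>
    (abs_log_one_add_sub_log_one_add_le (by positivity) (by positivity)).trans <| by
      field_simp
      nlinarith [sq_nonneg (w + m)]
  have hint : ∀ a, IntegrableOn (fun w => h w * ((√(2 * π))⁻¹ * exp (-((w - a) ^ 2) / 2)))
      (Ioi 0) := fun a => by
    have hgauss := (integrable_mul_exp_neg_mul_sub_sq_of_abs_le hh_cont (b := 1 / 2)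
      (by norm_num) (by positivity) hh_bound a).const_mul (√(2 * π))⁻¹
    refine (hgauss.congr (ae_of_all _ fun w => ?_)).integrableOn
    dsimp only
    rw [mul_left_comm]
    congr 3
    ring
  calc _ = ∫ w in Ioi 0, h w * ((√(2 * π))⁻¹ * exp (-((w - m) ^ 2) / 2)) := by
        rw [setIntegral_Iic_eq_setIntegral_Ioi_sub_left]
        congr with w
        rw [sub_sub_cancel_left, neg_sq, sub_sq_comm m w]
    _ < _ := by
      refine setIntegral_lt_setIntegral_of_forall_lt measurableSet_Ioi (by simp) (hint m)
        (by simpa using hint 0) fun w (hw : 0 < w) => ?_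
      have hsq : w ^ 2 < (w - m) ^ 2 := by nlinarith
      have hh_pos : 0 < h w := sub_pos.2 <| log_lt_log (by positivity) (by gcongr)
      gcongr
end

section
/- For every m ≠ 0, γ > 0 and η ∈ ℝ, ∫ log(1 + (u − m)²/(e^{2η}γ)) g(u) du > ∫ log(1 + u²/(e^{2η}γ)) g(u) du, where g is the standard normal density. -/
open Real MeasureTheory

lemma int_aux {c : ℝ} (hc : 0 < c) (a : ℝ) :
    Integrable (fun u : ℝ => Real.log (1 + (u - a) ^ 2 / c) *
      ((Real.sqrt (2 * Real.pi))⁻¹ * Real.exp (-(u ^ 2) / 2))) := by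
  have hK : (0:ℝ) < (Real.sqrt (2 * Real.pi))⁻¹ := by positivity
  have hmaj : Integrable (fun u : ℝ =>
      ((Real.sqrt (2 * Real.pi))⁻¹ * ((8 + 2 * a ^ 2) / c)) * Real.exp (-(1/4 : ℝ) * u ^ 2)) :=
    (integrable_exp_neg_mul_sq (by norm_num : (0:ℝ) < 1/4)).const_mul _
  have hpos : ∀ u : ℝ, (0:ℝ) < 1 + (u - a) ^ 2 / c := fun u => by positivity
  refine hmaj.mono' ?_ (Filter.Eventually.of_forall fun u => ?_)
  · apply Continuous.aestronglyMeasurable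
    exact ((continuous_const.add (((continuous_id.sub continuous_const).pow 2).div_const c)).log
      (fun u => (hpos u).ne')).mul (by fun_prop)
  · have hg0 : (0:ℝ) ≤ (Real.sqrt (2 * Real.pi))⁻¹ * Real.exp (-(u ^ 2) / 2) := by positivity
    have hl0 : 0 ≤ Real.log (1 + (u - a) ^ 2 / c) :=
      Real.log_nonneg (by nlinarith [div_nonneg (sq_nonneg (u-a)) hc.le])
    rw [Real.norm_eq_abs, abs_of_nonneg (mul_nonneg hl0 hg0)]
    have hlog : Real.log (1 + (u - a) ^ 2 / c) ≤ (u - a) ^ 2 / c := by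
      have h := Real.log_le_sub_one_of_pos (hpos u)
      linarith
    have hsq : (u - a) ^ 2 ≤ 2 * u ^ 2 + 2 * a ^ 2 := by nlinarith [sq_nonneg (u + a)]
    have hexp1 : u ^ 2 ≤ 4 * Real.exp (u ^ 2 / 4) := by
      have := Real.add_one_le_exp (u ^ 2 / 4)
      nlinarith [Real.exp_pos (u ^ 2 / 4)]
    have hexp2 : (1:ℝ) ≤ Real.exp (u ^ 2 / 4) := by
      rw [Real.one_le_exp_iff]; positivity
    have key : Real.log (1 + (u - a) ^ 2 / c) ≤ ((8 + 2 * a ^ 2) / c) * Real.exp (u ^ 2 / 4) := by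
      calc Real.log (1 + (u - a) ^ 2 / c) ≤ (u - a) ^ 2 / c := hlog
        _ ≤ (2 * u ^ 2 + 2 * a ^ 2) / c := by
            exact div_le_div_of_nonneg_right hsq hc.le
        _ ≤ ((8 + 2 * a ^ 2) * Real.exp (u ^ 2 / 4)) / c := by
            apply div_le_div_of_nonneg_right ?_ hc.le
            nlinarith [sq_nonneg a]
        _ = ((8 + 2 * a ^ 2) / c) * Real.exp (u ^ 2 / 4) := by ring
    have hE : Real.exp (u ^ 2 / 4) * Real.exp (-(u ^ 2) / 2) = Real.exp (-(1/4 : ℝ) * u ^ 2) := by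
      rw [← Real.exp_add]; ring_nf
    calc Real.log (1 + (u - a) ^ 2 / c) * ((Real.sqrt (2 * Real.pi))⁻¹ * Real.exp (-(u ^ 2) / 2))
        ≤ (((8 + 2 * a ^ 2) / c) * Real.exp (u ^ 2 / 4)) *
          ((Real.sqrt (2 * Real.pi))⁻¹ * Real.exp (-(u ^ 2) / 2)) :=
          mul_le_mul_of_nonneg_right key hg0
      _ = ((Real.sqrt (2 * Real.pi))⁻¹ * ((8 + 2 * a ^ 2) / c)) *
          (Real.exp (u ^ 2 / 4) * Real.exp (-(u ^ 2) / 2)) := by ring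
      _ = ((Real.sqrt (2 * Real.pi))⁻¹ * ((8 + 2 * a ^ 2) / c)) *
          Real.exp (-(1/4 : ℝ) * u ^ 2) := by rw [hE]

/-- For every `m ≠ 0`, `γ > 0` and `η ∈ ℝ`,
`∫ log(1 + (u − m)²/(e^{2η}γ)) g(u) du > ∫ log(1 + u²/(e^{2η}γ)) g(u) du`,
where `g` is the standard normal density. -/
theorem gaussian_expected_log_kernel_min_at_zero (γ η m : ℝ) (hγ : 0 < γ) (hm : m ≠ 0)
    (g : ℝ → ℝ) (hg : ∀ u : ℝ, g u = (Real.sqrt (2 * Real.pi))⁻¹ * Real.exp (-(u ^ 2) / 2)) :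
    (∫ u : ℝ, Real.log (1 + u ^ 2 / (Real.exp (2 * η) * γ)) * g u) <
      ∫ u : ℝ, Real.log (1 + (u - m) ^ 2 / (Real.exp (2 * η) * γ)) * g u := by
  have hgE : g = fun u : ℝ => (Real.sqrt (2 * Real.pi))⁻¹ * Real.exp (-(u ^ 2) / 2) := funext hg
  subst hgE
  set c : ℝ := Real.exp (2 * η) * γ with hcdef
  have hc : 0 < c := mul_pos (Real.exp_pos _) hγ
  set gd : ℝ → ℝ := fun u : ℝ => (Real.sqrt (2 * Real.pi))⁻¹ * Real.exp (-(u ^ 2) / 2) with hgd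
  have hK : (0:ℝ) < (Real.sqrt (2 * Real.pi))⁻¹ := by positivity
  have Im : Integrable (fun u : ℝ => Real.log (1 + (u - m) ^ 2 / c) * gd u) := int_aux hc m
  have I0 : Integrable (fun u : ℝ => Real.log (1 + u ^ 2 / c) * gd u) := by
    simpa only [sub_zero] using int_aux hc 0
  set G : ℝ → ℝ := fun u =>
    (Real.log (1 + (u - m) ^ 2 / c) - Real.log (1 + u ^ 2 / c)) * gd u with hG
  have hGint : Integrable G := by
    refine (Im.sub I0).congr (Filter.Eventually.of_forall fun u => ?_)
    simp only [hG, Pi.sub_apply]; ring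
  have hGshift : Integrable (fun u : ℝ => G (m - u)) := hGint.comp_sub_left m
  have hsym : ∀ u : ℝ, G u + G (m - u) =
      (Real.log (1 + (u - m) ^ 2 / c) - Real.log (1 + u ^ 2 / c)) * (gd u - gd (m - u)) := by
    intro u
    have e1 : (m - u - m) ^ 2 = u ^ 2 := by ring
    have e2 : (m - u) ^ 2 = (u - m) ^ 2 := by ring
    simp only [hG, hgd]
    rw [e1, e2]
    ring
  set P : ℝ → ℝ := fun u =>
    (Real.log (1 + (u - m) ^ 2 / c) - Real.log (1 + u ^ 2 / c)) * (gd u - gd (m - u)) with hPdef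
  have hPint : Integrable P := by
    refine (hGint.add hGshift).congr (Filter.Eventually.of_forall fun u => ?_)
    exact hsym u
  -- pointwise sign analysis
  have hP : ∀ u : ℝ, 0 ≤ P u ∧ (u ≠ m / 2 → 0 < P u) := by
    intro u
    have hd1 : (u - m) ^ 2 = u ^ 2 + m * (m - 2 * u) := by ring
    have hd2 : (m - u) ^ 2 = u ^ 2 + m * (m - 2 * u) := by ring
    set d : ℝ := m * (m - 2 * u) with hddef
    have hx : (0:ℝ) < 1 + u ^ 2 / c := by positivity
    have hud : (0:ℝ) ≤ u ^ 2 + d := hd1 ▸ sq_nonneg (u - m)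
    have hy : (0:ℝ) < 1 + (u ^ 2 + d) / c := by
      have := div_nonneg hud hc.le; linarith
    have hPu : P u = (Real.log (1 + (u ^ 2 + d) / c) - Real.log (1 + u ^ 2 / c)) *
        ((Real.sqrt (2 * Real.pi))⁻¹ * Real.exp (-(u ^ 2) / 2) -
         (Real.sqrt (2 * Real.pi))⁻¹ * Real.exp (-(u ^ 2 + d) / 2)) := by
      simp only [hPdef, hgd]
      rw [hd1, hd2]
    rcases lt_trichotomy d 0 with hd | hd | hd
    · have hA : Real.log (1 + (u ^ 2 + d) / c) < Real.log (1 + u ^ 2 / c) := by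
        apply Real.log_lt_log hy
        have h1 : (1 + u ^ 2 / c) - (1 + (u ^ 2 + d) / c) = -d / c := by ring
        have h2 : (0:ℝ) < -d / c := div_pos (by linarith) hc
        linarith
      have hB : (Real.sqrt (2 * Real.pi))⁻¹ * Real.exp (-(u ^ 2) / 2) <
          (Real.sqrt (2 * Real.pi))⁻¹ * Real.exp (-(u ^ 2 + d) / 2) := by
        apply mul_lt_mul_of_pos_left _ hK
        exact Real.exp_lt_exp.mpr (by linarith)
      have : 0 < P u := by
        rw [hPu]; exact mul_pos_of_neg_of_neg (by linarith) (by linarith)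
      exact ⟨this.le, fun _ => this⟩
    · have hu2 : u = m / 2 := by
        rcases mul_eq_zero.mp hd with h | h
        · exact absurd h hm
        · linarith
      have hP0 : P u = 0 := by
        rw [hPu, hd]; simp
      exact ⟨hP0.ge, fun h => absurd hu2 h⟩
    · have hA : Real.log (1 + u ^ 2 / c) < Real.log (1 + (u ^ 2 + d) / c) := by
        apply Real.log_lt_log hx
        have h2 : (0:ℝ) < d / c := div_pos hd hc
        have h1 : (1 + (u ^ 2 + d) / c) - (1 + u ^ 2 / c) = d / c := by ring
        linarith
      have hB : (Real.sqrt (2 * Real.pi))⁻¹ * Real.exp (-(u ^ 2 + d) / 2) <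
          (Real.sqrt (2 * Real.pi))⁻¹ * Real.exp (-(u ^ 2) / 2) := by
        apply mul_lt_mul_of_pos_left _ hK
        exact Real.exp_lt_exp.mpr (by linarith)
      have : 0 < P u := by
        rw [hPu]; exact mul_pos (by linarith) (by linarith)
      exact ⟨this.le, fun _ => this⟩
  -- positivity of ∫ P
  have hsub : Set.Ioi (m / 2) ⊆ Function.support P := fun u hu =>
    ne_of_gt ((hP u).2 (ne_of_gt hu))
  have hPpos : 0 < ∫ u : ℝ, P u := by
    rw [integral_pos_iff_support_of_nonneg (fun u => (hP u).1) hPint]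
    refine lt_of_lt_of_le ?_ (measure_mono hsub)
    simp [Real.volume_Ioi]
  -- ∫ P = 2 ∫ G
  have h2 : (∫ u : ℝ, G (m - u)) = ∫ u : ℝ, G u := integral_sub_left_eq_self G volume m
  have h1 : (∫ u : ℝ, P u) = 2 * ∫ u : ℝ, G u := by
    rw [show P = fun u => G u + G (m - u) from funext fun u => (hsym u).symm,
      integral_add hGint hGshift, h2]
    ring
  have hGval : (∫ u : ℝ, G u) =
      (∫ u : ℝ, Real.log (1 + (u - m) ^ 2 / c) * gd u) -
      ∫ u : ℝ, Real.log (1 + u ^ 2 / c) * gd u := by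
    rw [← integral_sub Im I0]
    congr 1
    funext u
    simp only [hG, Pi.sub_apply]
    ring
  have : 0 < (∫ u : ℝ, Real.log (1 + (u - m) ^ 2 / c) * gd u) -
      ∫ u : ℝ, Real.log (1 + u ^ 2 / c) * gd u := by
    rw [← hGval]; linarith [h1 ▸ hPpos]
  linarith
end

section
/- For Z standard normal and any s > 0: E[(1 − Z²/s)/(1 + Z²/s)²] > 0, i.e., ∫ (1 − u²/s)(1 + u²/s)^{-2} φ(u) du > 0. -/
open Real MeasureTheory Filter

section aux

variable (s : ℝ)

private lemma denom_pos (hs : 0 < s) (u : ℝ) : 0 < 1 + u ^ 2 / s := by positivity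

private lemma c_pos : 0 < (Real.sqrt (2 * Real.pi))⁻¹ := by
  have : 0 < Real.sqrt (2 * Real.pi) := Real.sqrt_pos.2 (by positivity)
  positivity

/-- the Gaussian density is integrable -/
private lemma phi_integrable :
    Integrable (fun u : ℝ => (Real.sqrt (2 * Real.pi))⁻¹ * Real.exp (-(u ^ 2) / 2)) := by
  have h : Integrable (fun u : ℝ => Real.exp (-((1:ℝ)/2) * u ^ 2)) :=
    integrable_exp_neg_mul_sq (by norm_num)
  have := h.const_mul ((Real.sqrt (2 * Real.pi))⁻¹)
  convert this using 2 with u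
  ring_nf

end aux

/-- For every `s > 0`, `J(s) = ∫ (1 − u²/s)/(1 + u²/s)² φ(u) du > 0`, where `φ` is
the standard normal density. -/
theorem gaussian_student_info_positive (s : ℝ) (hs : 0 < s)
    (φ : ℝ → ℝ) (hφ : ∀ u : ℝ, φ u = (Real.sqrt (2 * Real.pi))⁻¹ * Real.exp (-(u ^ 2) / 2)) :
    0 < ∫ u : ℝ, (1 - u ^ 2 / s) / (1 + u ^ 2 / s) ^ 2 * φ u := by
  set c : ℝ := (Real.sqrt (2 * Real.pi))⁻¹ with hc
  have hcpos : 0 < c := c_pos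
  have hφpos : ∀ u, 0 < φ u := fun u => by rw [hφ u]; positivity
  have hden : ∀ u : ℝ, 0 < 1 + u ^ 2 / s := denom_pos s hs
  have hφint : Integrable φ := by
    simpa only [← hφ] using (phi_integrable).congr (Eventually.of_forall fun u => (hφ u).symm)
  have hφcont : Continuous φ := by
    have : Continuous fun u : ℝ => c * Real.exp (-(u ^ 2) / 2) := by continuity
    exact this.congr fun u => (hφ u).symm
  -- the two integrands
  set A : ℝ → ℝ := fun u => (1 - u ^ 2 / s) / (1 + u ^ 2 / s) ^ 2 * φ u with hA
  set B : ℝ → ℝ := fun u => u ^ 2 / (1 + u ^ 2 / s) * φ u with hB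
  have hAcont : Continuous A := by
    apply Continuous.mul _ hφcont
    exact (continuous_const.sub (continuous_pow 2 |>.div_const s)).div
      ((continuous_const.add (continuous_pow 2 |>.div_const s)).pow 2)
      (fun u => by positivity)
  have hBcont : Continuous B := by
    apply Continuous.mul _ hφcont
    exact (continuous_pow 2).div
      (continuous_const.add (continuous_pow 2 |>.div_const s)) (fun u => (hden u).ne')
  -- integrability of A
  have hAint : Integrable A := by
    refine hφint.mono hAcont.aestronglyMeasurable (Eventually.of_forall fun u => ?_)
    rw [Real.norm_eq_abs, Real.norm_eq_abs, abs_of_pos (hφpos u)]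
    rw [show A u = (1 - u ^ 2 / s) / (1 + u ^ 2 / s) ^ 2 * φ u from rfl]
    rw [abs_mul, abs_of_pos (hφpos u)]
    have h1 : |(1 - u ^ 2 / s) / (1 + u ^ 2 / s) ^ 2| ≤ 1 := by
      rw [abs_div, abs_of_pos (pow_pos (hden u) 2)]
      rw [div_le_one (pow_pos (hden u) 2)]
      have hx : 0 ≤ u ^ 2 / s := by positivity
      have : |1 - u ^ 2 / s| ≤ 1 + u ^ 2 / s := by
        rw [abs_le]; constructor <;> nlinarith
      nlinarith [hden u]
    calc |(1 - u ^ 2 / s) / (1 + u ^ 2 / s) ^ 2| * φ u ≤ 1 * φ u :=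
          mul_le_mul_of_nonneg_right h1 (hφpos u).le
      _ = φ u := one_mul _
  -- integrability of B
  have hBint : Integrable B := by
    refine (hφint.const_mul s).mono hBcont.aestronglyMeasurable
      (Eventually.of_forall fun u => ?_)
    rw [Real.norm_eq_abs, Real.norm_eq_abs]
    rw [show B u = u ^ 2 / (1 + u ^ 2 / s) * φ u from rfl]
    rw [abs_mul, abs_of_pos (hφpos u)]
    have h1 : |u ^ 2 / (1 + u ^ 2 / s)| ≤ s := by
      rw [abs_of_nonneg (by positivity), div_le_iff₀ (hden u)]
      have h2 : s * (u ^ 2 / s) = u ^ 2 := mul_div_cancel₀ _ hs.ne'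
      nlinarith [sq_nonneg u]
    have hss : s * φ u ≤ |s * φ u| := le_abs_self _
    nlinarith [hφpos u, mul_le_mul_of_nonneg_right h1 (hφpos u).le]
  -- the antiderivative F
  set F : ℝ → ℝ := fun u => u / (1 + u ^ 2 / s) * φ u with hF
  -- derivative of F
  have hderiv : ∀ u : ℝ, HasDerivAt F (A u - B u) u := by
    intro u
    have hg : HasDerivAt (fun u : ℝ => u / (1 + u ^ 2 / s))
        ((1 * (1 + u ^ 2 / s) - u * (2 * u ^ 1 / s)) / (1 + u ^ 2 / s) ^ 2) u := by
      exact (hasDerivAt_id u).div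
        (((hasDerivAt_pow 2 u).div_const s).const_add 1) (hden u).ne'
    have hh : HasDerivAt (fun u : ℝ => c * Real.exp (-(u ^ 2) / 2))
        (c * (Real.exp (-(u ^ 2) / 2) * (-(2 * u ^ 1) / 2))) u := by
      exact ((((hasDerivAt_pow 2 u).neg).div_const 2).exp).const_mul c
    have hφd : HasDerivAt φ (-u * φ u) u := by
      have heq : φ =ᶠ[nhds u] fun x : ℝ => c * Real.exp (-(x ^ 2) / 2) :=
        Eventually.of_forall fun x => hφ x
      have := hh.congr_of_eventuallyEq heq
      refine this.congr_deriv ?_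
      rw [hφ u]; ring
    have := (hg.mul hφd)
    refine this.congr_deriv ?_
    rw [hA, hB]
    have h2 : ((1:ℝ) + u ^ 2 / s) ≠ 0 := (hden u).ne'
    field_simp
    ring
  -- limits of F at ±∞
  have hFbound : ∀ u : ℝ, ‖F u‖ ≤ c * Real.sqrt s / 2 * Real.exp (-(u ^ 2) / 2) := by
    intro u
    have hsq : 0 < Real.sqrt s := Real.sqrt_pos.2 hs
    have hg : |u / (1 + u ^ 2 / s)| ≤ Real.sqrt s / 2 := by
      rw [abs_div, abs_of_pos (hden u), div_le_div_iff₀ (hden u) two_pos]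
      have h1 : Real.sqrt s * Real.sqrt s = s := Real.mul_self_sqrt hs.le
      have h2 : Real.sqrt s * (u ^ 2 / s) * Real.sqrt s = u ^ 2 := by
        field_simp
        nlinarith [h1]
      nlinarith [sq_nonneg (|u| - Real.sqrt s), sq_abs u, hsq,
        mul_pos hsq (hden u)]
    rw [hF, Real.norm_eq_abs, abs_mul, hφ u, abs_mul, abs_of_pos hcpos,
      abs_of_pos (Real.exp_pos _)]
    calc |u / (1 + u ^ 2 / s)| * (c * Real.exp (-(u ^ 2) / 2))
        ≤ Real.sqrt s / 2 * (c * Real.exp (-(u ^ 2) / 2)) := by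
          exact mul_le_mul_of_nonneg_right hg (by positivity)
      _ = c * Real.sqrt s / 2 * Real.exp (-(u ^ 2) / 2) := by ring
  have hexp_top : Tendsto (fun u : ℝ => c * Real.sqrt s / 2 * Real.exp (-(u ^ 2) / 2))
      atTop (nhds 0) := by
    rw [show (0:ℝ) = c * Real.sqrt s / 2 * 0 by ring]
    apply Tendsto.const_mul
    apply Real.tendsto_exp_atBot.comp
    apply Tendsto.atBot_div_const two_pos
    apply tendsto_neg_atBot_iff.mpr
    exact tendsto_pow_atTop (by norm_num)
  have hexp_bot : Tendsto (fun u : ℝ => c * Real.sqrt s / 2 * Real.exp (-(u ^ 2) / 2))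
      atBot (nhds 0) := by
    rw [show (0:ℝ) = c * Real.sqrt s / 2 * 0 by ring]
    apply Tendsto.const_mul
    apply Real.tendsto_exp_atBot.comp
    apply Tendsto.atBot_div_const two_pos
    apply tendsto_neg_atBot_iff.mpr
    have : Tendsto (fun u : ℝ => u ^ 2) atBot atTop := by
      have habs : Tendsto (fun u : ℝ => |u|) atBot atTop := tendsto_abs_atBot_atTop
      have := (tendsto_pow_atTop (n := 2) (by norm_num)).comp habs
      refine this.congr fun u => ?_
      simp [sq_abs]
    exact this
  have hFtop : Tendsto F atTop (nhds 0) :=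
    squeeze_zero_norm hFbound hexp_top
  have hFbot : Tendsto F atBot (nhds 0) :=
    squeeze_zero_norm hFbound hexp_bot
  -- FTC on the whole line
  have hint0 : ∫ u : ℝ, (A u - B u) = 0 := by
    have := MeasureTheory.integral_of_hasDerivAt_of_tendsto hderiv (hAint.sub hBint) hFbot hFtop
    simpa using this
  have hsub : ∫ u : ℝ, A u = ∫ u : ℝ, B u := by
    have := integral_sub hAint hBint
    rw [this] at hint0
    linarith
  -- positivity of ∫ B
  have hBpos : 0 < ∫ u : ℝ, B u := by
    rw [integral_pos_iff_support_of_nonneg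
      (fun u => mul_nonneg (div_nonneg (sq_nonneg u) (hden u).le) (hφpos u).le) hBint]
    have hsub2 : Set.Ioi (0:ℝ) ⊆ Function.support B := by
      intro u hu
      have hu0 : (0:ℝ) < u := hu
      simp only [Function.mem_support, hB]
      have : 0 < u ^ 2 / (1 + u ^ 2 / s) * φ u :=
        mul_pos (div_pos (pow_pos hu0 2) (hden u)) (hφpos u)
      exact this.ne'
    calc (0 : ENNReal) < volume (Set.Ioi (0:ℝ)) := by simp [Real.volume_Ioi]
      _ ≤ volume (Function.support B) := measure_mono hsub2
  rw [show (fun u : ℝ => (1 - u ^ 2 / s) / (1 + u ^ 2 / s) ^ 2 * φ u) = A from rfl] at *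
  rw [hsub]
  exact hBpos
end

section
/- If the prior density satisfies π(β, σ) ≤ max(C, C/σ) for all β ∈ ℝ^p, σ > 0 and the modified likelihood includes a factor σ^{|O|γ} with k := |O^c| − |O|γ > p + 1 non-outlier Student density terms, then the modified marginal m(y_{O^c}) = ∫∫ π(β,σ) σ^{|O|γ} ∏_{i∈O^c} (1/σ) f((y_i − x_i^Tβ)/σ) dσ dβ is finite, given that m is finite whenever there are more than p+1 Student density factors (properness of the Student posterior). -/
open Real MeasureTheory

/-!
Choose `|O|γ` of the indices in `Oᶜ`. Pairing each of them with one factor of `σ^{|O|γ}`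
turns `(1/σ) f(·/σ)` into `f(·/σ) ≤ C`, so the modified integrand is bounded by `C^{|O|γ}`
times the Student posterior integrand of the remaining `|Oᶜ| − |O|γ > p + 1` observations,
which is integrable by assumption.
-/

theorem continuous_mul_one_add_sq_div_rpow (c ν a : ℝ) (hν : 0 ≤ ν) :
    Continuous fun z : ℝ => c * (1 + z ^ 2 / ν) ^ a :=
  continuous_const.mul <| by
    refine (by fun_prop : Continuous fun z : ℝ => 1 + z ^ 2 / ν).rpow_const fun z => Or.inl ?_
    positivity

theorem Finset.pow_card_mul_prod_one_div_mul {ι K : Type*} [DecidableEq ι] [Field K]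
    {σ : K} (hσ : σ ≠ 0) {R U : Finset ι} (hRU : R ⊆ U) (g : ι → K) :
    σ ^ R.card * ∏ i ∈ U, (1 / σ) * g i = (∏ i ∈ R, g i) * ∏ i ∈ U \ R, (1 / σ) * g i := by
  have hR : σ ^ R.card * ∏ i ∈ R, (1 / σ) * g i = ∏ i ∈ R, g i := by
    rw [Finset.prod_mul_distrib, Finset.prod_const, ← mul_assoc, ← mul_pow,
      mul_one_div_cancel hσ, one_pow, one_mul]
  rw [← Finset.prod_sdiff hRU, ← hR]
  ring

theorem integrableOn_mul_pow_card_mul_prod_one_div_mul {α ι : Type*} [MeasurableSpace α]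
    [DecidableEq ι] {μ : Measure α} {s : Set α} (hs : MeasurableSet s)
    {w σ : α → ℝ} {g : ι → α → ℝ} {C : ℝ} {R U : Finset ι} (hRU : R ⊆ U)
    (hσ : ∀ a ∈ s, σ a ≠ 0) (hg : ∀ i ∈ R, Measurable (g i)) (hgC : ∀ i ∈ R, ∀ a, ‖g i a‖ ≤ C)
    (hint : IntegrableOn (fun a => w a * ∏ i ∈ U \ R, (1 / σ a) * g i a) s μ) :
    IntegrableOn (fun a => w a * σ a ^ R.card * ∏ i ∈ U, (1 / σ a) * g i a) s μ := by
  have hbound : ∀ a, ‖∏ i ∈ R, g i a‖ ≤ C ^ R.card := fun a => by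
    rw [norm_prod, ← Finset.prod_const]
    exact Finset.prod_le_prod (fun i _ => norm_nonneg _) fun i hi => hgC i hi a
  have hbdd : IntegrableOn (fun a => (∏ i ∈ R, g i a) *
      (w a * ∏ i ∈ U \ R, (1 / σ a) * g i a)) s μ :=
    hint.bdd_mul (Finset.measurable_prod R hg).aestronglyMeasurable
      (Filter.Eventually.of_forall hbound)
  refine hbdd.congr_fun (fun a ha => ?_) hs
  rw [mul_assoc, Finset.pow_card_mul_prod_one_div_mul (hσ a ha) hRU]
  ring

theorem limiting_posterior_proper_general (n p γ : ℕ)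
    (cγ : ℝ) (hcγ : 0 < cγ)
    (f : ℝ → ℝ)
    (hf : ∀ z : ℝ, f z = cγ * (1 + z ^ 2 / (γ : ℝ)) ^ (-(((γ : ℝ) + 1)) / 2))
    (C : ℝ) (hfC : ∀ z : ℝ, f z ≤ C)
    (pr : (Fin p → ℝ) → ℝ → ℝ)
    (y : Fin n → ℝ) (x : Fin n → (Fin p → ℝ))
    -- properness of the Student posterior with any subcollection of more than
    -- p+1 observations (Proposition 2.1 of Gagnon et al. (2020))
    (hproper : ∀ S : Finset (Fin n), p + 1 < S.card →
      IntegrableOn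
        (fun q : (Fin p → ℝ) × ℝ =>
          pr q.1 q.2 * ∏ i ∈ S, (1 / q.2) * f ((y i - ∑ j, x i j * q.1 j) / q.2))
        (Set.univ ×ˢ Set.Ioi (0 : ℝ)))
    (O : Finset (Fin n))
    (hcard : (p : ℤ) + 1 < (Oᶜ.card : ℤ) - (O.card : ℤ) * (γ : ℤ)) :
    IntegrableOn
      (fun q : (Fin p → ℝ) × ℝ =>
        pr q.1 q.2 * q.2 ^ (O.card * γ) *
          ∏ i ∈ Oᶜ, (1 / q.2) * f ((y i - ∑ j, x i j * q.1 j) / q.2))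
      (Set.univ ×ˢ Set.Ioi (0 : ℝ)) := by
  have hf0 : ∀ z, 0 ≤ f z := fun z => by rw [hf]; positivity
  have hfc : Continuous f :=
    funext hf ▸ continuous_mul_one_add_sq_div_rpow _ _ _ γ.cast_nonneg
  obtain ⟨R, hRO, hR⟩ :=
    Finset.exists_subset_card_eq (s := Oᶜ) (n := O.card * γ) (by omega)
  have hrest : p + 1 < (Oᶜ \ R).card := by
    rw [Finset.card_sdiff_of_subset hRO, hR]; omega
  rw [← hR]
  exact integrableOn_mul_pow_card_mul_prod_one_div_mul
    (MeasurableSet.univ.prod measurableSet_Ioi) hRO (fun q hq => hq.2.ne')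
    (fun i _ => hfc.measurable.comp (by fun_prop))
    (fun i _ q => by rw [Real.norm_of_nonneg (hf0 _)]; exact hfC _) (hproper _ hrest)

/-- Properness of the limiting posterior: if the prior density satisfies
`pr(β,σ) ≤ C max(1, 1/σ)`, the Student density `f` is bounded by `C`, and the
Student posterior is proper whenever there are more than `p+1` density factors,
then the modified marginal
`∫∫ pr(β,σ) σ^{|O|γ} ∏_{i∈Oᶜ} (1/σ) f((yᵢ − xᵢ·β)/σ) dσ dβ`
is finite provided `|Oᶜ| − |O|γ > p + 1`. -/
theorem limiting_posterior_proper (n p γ : ℕ) (hγ : 1 ≤ γ)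
    (cγ : ℝ) (hcγ : 0 < cγ)
    (f : ℝ → ℝ)
    (hf : ∀ z : ℝ, f z = cγ * (1 + z ^ 2 / (γ : ℝ)) ^ (-(((γ : ℝ) + 1)) / 2))
    (C : ℝ) (hC : 0 < C) (hfC : ∀ z : ℝ, f z ≤ C)
    (pr : (Fin p → ℝ) → ℝ → ℝ) (hπ0 : ∀ β σ, 0 ≤ pr β σ)
    (hπ : ∀ (β : Fin p → ℝ) (σ : ℝ), 0 < σ → pr β σ ≤ max C (C / σ))
    (y : Fin n → ℝ) (x : Fin n → (Fin p → ℝ))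
    -- properness of the Student posterior with any subcollection of more than
    -- p+1 observations (Proposition 2.1 of Gagnon et al. (2020))
    (hproper : ∀ S : Finset (Fin n), p + 1 < S.card →
      IntegrableOn
        (fun q : (Fin p → ℝ) × ℝ =>
          pr q.1 q.2 * ∏ i ∈ S, (1 / q.2) * f ((y i - ∑ j, x i j * q.1 j) / q.2))
        (Set.univ ×ˢ Set.Ioi (0 : ℝ)))
    (O : Finset (Fin n))
    (hcard : (p : ℤ) + 1 < (Oᶜ.card : ℤ) - (O.card : ℤ) * (γ : ℤ)) :
    IntegrableOn
      (fun q : (Fin p → ℝ) × ℝ =>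
        pr q.1 q.2 * q.2 ^ (O.card * γ) *
          ∏ i ∈ Oᶜ, (1 / q.2) * f ((y i - ∑ j, x i j * q.1 j) / q.2))
      (Set.univ ×ˢ Set.Ioi (0 : ℝ)) :=
  limiting_posterior_proper_general n p γ cγ hcγ f hf C hfC pr y x hproper O hcard
end
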